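/- arXiv:1608.07255 — 3 statements merged into one kernel-verified Lean document; each statement's English description precedes it below -/
import Mathlib

section
/- Let G be an acyclic directed graph, ≺ a linear order on E(G) satisfying condition (U3), and v1, v2 two vertices of G. If Ō(v1) ∩ Ō(v2) ≠ ∅, then either Ō(v1) ⊆ Ō(v2) or Ō(v2) ⊆ Ō(v1). -/
variable {V E : Type}

/-- Edge reachability `e1 → e2`: a directed path of edges `f_0, …, f_k` with `k ≥ 1`,
`f_0 = e1`, `f_k = e2` and `t f_{i-1} = s f_i`. -/
def eReach (s t : E → V) : E → E → Prop :=
  Relation.TransGen (fun a b => t a = s b)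

/-- Vertex reachability `v → w`: a directed path from `v` to `w` using at least one edge. -/
def vReach (s t : E → V) : V → V → Prop :=
  Relation.TransGen (fun v w => ∃ e, s e = v ∧ t e = w)

/-- A directed graph is acyclic if no vertex reaches itself. -/
def Acyclic (s t : E → V) : Prop := ∀ v, ¬ vReach s t v v

/-- `I(v)`: incoming edges of `v`. -/
def inE (t : E → V) (v : V) : Set E := {e | t e = v}

/-- `O(v)`: outgoing edges of `v`. -/
def outE (s : E → V) (v : V) : Set E := {e | s e = v}

/-- Convex hull `X̄` of `X` in the linear order `le`: the interval `{y | X^- ≤ y ≤ X^+}`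
(empty when `X` is empty). -/
def hull (le : E → E → Prop) (X : Set E) : Set E :=
  {y | ∃ a ∈ X, ∃ b ∈ X, le a y ∧ le y b}

/-- The strict order associated to a linear order `le`. -/
def ltOf (le : E → E → Prop) (a b : E) : Prop := le a b ∧ a ≠ b

/-- A source: no incoming edges. -/
def IsSource (t : E → V) (v : V) : Prop := inE t v = ∅

/-- A sink: no outgoing edges. -/
def IsSink (s : E → V) (v : V) : Prop := outE s v = ∅

/-- A progressive graph: acyclic and every source and every sink has degree 1. -/
def Progressive (s t : E → V) : Prop :=
  Acyclic s t ∧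
  ∀ v, (IsSource t v ∨ IsSink s v) → ({e | s e = v ∨ t e = v} : Set E).ncard = 1

/-- `I(G)`: input edges, those whose source vertex is a source of `G`. -/
def inputE (s t : E → V) : Set E := {e | IsSource t (s e)}

/-- `O(G)`: output edges, those whose target vertex is a sink of `G`. -/
def outputE (s t : E → V) : Set E := {e | IsSink s (t e)}

/-- Condition (U1) = (P1): `e1 → e2` implies `e1 ≺ e2`. -/
def U1 (s t : E → V) (le : E → E → Prop) : Prop :=
  ∀ e1 e2, eReach s t e1 e2 → ltOf le e1 e2

/-- Condition (U2): for every vertex `v`, `Ī(v) ∩ Ō(v) = ∅` and `Ē(v) = Ī(v) ∪ Ō(v)`. -/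
def U2 (s t : E → V) (le : E → E → Prop) : Prop :=
  ∀ v, hull le (inE t v) ∩ hull le (outE s v) = ∅ ∧
    hull le (inE t v ∪ outE s v) = hull le (inE t v) ∪ hull le (outE s v)

/-- Condition (U3). -/
def U3 (s t : E → V) (le : E → E → Prop) : Prop :=
  ∀ v1 v2,
    ((inE t v1 ∩ hull le (inE t v2)).Nonempty →
      hull le (inE t v1) ⊆ hull le (inE t v2)) ∧
    ((outE s v1 ∩ hull le (outE s v2)).Nonempty →
      hull le (outE s v1) ⊆ hull le (outE s v2))

/-- Condition (U4): for every progressive vertex `v`, `I(G) ∩ Ō(v) = ∅` and `O(G) ∩ Ī(v) = ∅`. -/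
def U4 (s t : E → V) (le : E → E → Prop) : Prop :=
  ∀ v, ¬ IsSource t v → ¬ IsSink s v →
    inputE s t ∩ hull le (outE s v) = ∅ ∧ outputE s t ∩ hull le (inE t v) = ∅

/-- An upward planar order: a linear order on the edges satisfying (U1), (U2), (U3). -/
def IsUPO (s t : E → V) (le : E → E → Prop) : Prop :=
  IsLinearOrder E le ∧ U1 s t le ∧ U2 s t le ∧ U3 s t le

/-- Condition (P2). -/
def P2 (s t : E → V) (le : E → E → Prop) : Prop :=
  ∀ e1 e2 e3, ltOf le e1 e2 → ltOf le e2 e3 → eReach s t e1 e3 →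
    eReach s t e1 e2 ∨ eReach s t e2 e3

/-- Condition (P̃2). -/
def P2t (s t : E → V) (le : E → E → Prop) : Prop :=
  ∀ e1 e2 e3, ltOf le e1 e2 → ltOf le e2 e3 → t e1 = s e3 →
    eReach s t e1 e2 ∨ eReach s t e2 e3

/-- Condition (P3) (for distinct vertices). -/
def P3 (s t : E → V) (le : E → E → Prop) : Prop :=
  ∀ v1 v2, v1 ≠ v2 →
    ((inE t v1 ∩ hull le (inE t v2)).Nonempty → vReach s t v1 v2) ∧
    ((outE s v1 ∩ hull le (outE s v2)).Nonempty → vReach s t v2 v1)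

/-- Condition (A): for distinct `v1 v2`, `∅ ≠ Ī(v1) ⊆ Ī(v2)` implies `v1 → v2`,
and `∅ ≠ Ō(v1) ⊆ Ō(v2)` implies `v2 → v1`. -/
def CondA (s t : E → V) (le : E → E → Prop) : Prop :=
  ∀ v1 v2, v1 ≠ v2 →
    ((hull le (inE t v1)).Nonempty → hull le (inE t v1) ⊆ hull le (inE t v2) →
      vReach s t v1 v2) ∧
    ((hull le (outE s v1)).Nonempty → hull le (outE s v1) ⊆ hull le (outE s v2) →
      vReach s t v2 v1)

/-- A POP-graph: a progressive graph with a planar order ((P1) and (P2)). -/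
def IsPOP (s t : E → V) (le : E → E → Prop) : Prop :=
  Progressive s t ∧ IsLinearOrder E le ∧ U1 s t le ∧ P2 s t le

/-- `U(v) = {w | Ō(v) ⊊ Ō(w)}` when `O(v) ≠ ∅`, and `U(v) = ∅` otherwise. -/
def Uset (s : E → V) (le : E → E → Prop) (v : V) : Set V :=
  {w | (outE s v).Nonempty ∧ hull le (outE s v) ⊂ hull le (outE s w)}

/-- `D(v) = {w | Ī(v) ⊊ Ī(w)}` when `I(v) ≠ ∅`, and `D(v) = ∅` otherwise. -/
def Dset (t : E → V) (le : E → E → Prop) (v : V) : Set V :=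
  {w | (inE t v).Nonempty ∧ hull le (inE t v) ⊂ hull le (inE t w)}

/-- A CPP-extension of `G = (s, t)`: a POP-graph `(s', t', le')` with an embedding
`(φ0, φ1)` satisfying (E1)–(E4). -/
def IsCPP {V' E' : Type} (s t : E → V) (s' t' : E' → V')
    (le' : E' → E' → Prop) (φ0 : V → V') (φ1 : E → E') : Prop :=
  Function.Injective φ0 ∧ Function.Injective φ1 ∧
  (∀ e, s' (φ1 e) = φ0 (s e)) ∧ (∀ e, t' (φ1 e) = φ0 (t e)) ∧
  IsPOP s' t' le' ∧
  -- (E1)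
  Set.range φ0 = {v : V' | ¬ IsSource t' v ∧ ¬ IsSink s' v} ∧
  -- (E2)
  Nat.card E' = Nat.card E + ({v : V | IsSource t v}).ncard + ({v : V | IsSink s v}).ncard ∧
  -- (E3)
  (∀ v w, IsSource t v → IsSink s w → inE t' (φ0 v) ∩ outE s' (φ0 w) = ∅) ∧
  -- (E4)
  (∀ e' : E', e' ∉ Set.range φ1 → e' ∉ inputE s' t' → e' ∉ outputE s' t' →
    ((∃ a ∈ outE s' (s' e'), ltOf le' a e') ∧ (∃ b ∈ outE s' (s' e'), ltOf le' e' b)) ∨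
    ((∃ a ∈ inE t' (t' e'), ltOf le' a e') ∧ (∃ b ∈ inE t' (t' e'), ltOf le' e' b)))

theorem inter_hull_nonempty_or_of_hull_inter_nonempty {le : E → E → Prop}
    [IsTrans E le] [Std.Total le] {X Y : Set E} (h : (hull le X ∩ hull le Y).Nonempty) :
    (X ∩ hull le Y).Nonempty ∨ (Y ∩ hull le X).Nonempty := by
  obtain ⟨x, ⟨a, ha, b, hb, hax, hxb⟩, ⟨c, hc, d, hd, hcx, hxd⟩⟩ := h
  rcases total_of le b d with hbd | hdb
  · exact .inl ⟨b, hb, c, hc, d, hd, _root_.trans hcx hxb, hbd⟩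
  · exact .inr ⟨d, hd, a, ha, b, hb, _root_.trans hax hxd, hdb⟩

theorem outHulls_nested_general {V E : Type}
    (s t : E → V) (le : E → E → Prop) (hlin : IsLinearOrder E le)
    (h3 : U3 s t le) (v1 v2 : V)
    (h : (hull le (outE s v1) ∩ hull le (outE s v2)).Nonempty) :
    hull le (outE s v1) ⊆ hull le (outE s v2) ∨
      hull le (outE s v2) ⊆ hull le (outE s v1) :=
  (inter_hull_nonempty_or_of_hull_inter_nonempty h).imp (h3 v1 v2).2 (h3 v2 v1).2

/-- under (U3), overlapping out-hulls are nested. -/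
theorem outHulls_nested {V E : Type} [Fintype V] [Fintype E]
    (s t : E → V) (le : E → E → Prop) (hlin : IsLinearOrder E le)
    (hac : Acyclic s t) (h3 : U3 s t le) (v1 v2 : V)
    (h : (hull le (outE s v1) ∩ hull le (outE s v2)).Nonempty) :
    hull le (outE s v1) ⊆ hull le (outE s v2) ∨
      hull le (outE s v2) ⊆ hull le (outE s v1) :=
  outHulls_nested_general s t le hlin h3 v1 v2 h
end

section
/- Let (G, ≺) be a UPO-graph whose underlying directed graph G is a progressive graph. Then ≺ satisfies condition (A) if and only if ≺ satisfies condition (U4). -/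
variable {V E : Type}

/-!
(A) ⇒ (U4): an input edge `e` in `Ō(v)` has `Ō(s e) = {e} ⊆ Ō(v)`, so (A) would give a path
`v → s e` ending in a source.

(U4) ⇒ (A): an edge `e ∈ Ī(v) \ I(v)` starts a path to `v`. By (U4) `t e` is not a sink, so it has
an outgoing edge `f ≻ e`. Either `f` still lies in `Ī(v)`, nearer to its top, or some `b ∈ I(v)`
with `e ≺ b ≼ f` lies in `Ē(t e)`; by (U2) and (U3) (as `t e ≠ v`) it lies in `Ō(t e)`, where the
mirror statement gives `t e → s b`. Reversing the edges and the order exchanges the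
in- and out- versions, so one induction on the number of edges of `Ī(v)` above `e` proves both.
-/

open Function

section

variable {s t : E → V} {le : E → E → Prop}

theorem exists_mem_forall_le_of_isLinearOrder [Finite E] [IsLinearOrder E le] {X : Set E}
    (hX : X.Nonempty) : ∃ m ∈ X, ∀ x ∈ X, le m x := by
  let _ : LinearOrder E :=
    { le := le
      le_refl := refl_of le
      le_trans := fun _ _ _ => trans_of le
      le_antisymm := fun _ _ => antisymm_of le
      le_total := total_of le
      toDecidableLE := Classical.decRel _ }
  exact Set.exists_min_image X id X.toFinite hX

theorem mem_hull_of_mem [Std.Refl le] {X : Set E} {x : E} (hx : x ∈ X) : x ∈ hull le X :=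
  ⟨x, hx, x, hx, refl_of le x, refl_of le x⟩

theorem hull_swap (le : E → E → Prop) (X : Set E) : hull (swap le) X = hull le X := by
  ext y
  constructor <;> rintro ⟨a, ha, b, hb, hay, hyb⟩ <;> exact ⟨b, hb, a, ha, hyb, hay⟩

theorem inter_nonempty_of_hull_eq [Finite E] [IsLinearOrder E le] {X Y : Set E}
    (hX : X.Nonempty) (h : hull le X = hull le Y) : (X ∩ Y).Nonempty := by
  obtain ⟨m, hmX, hmin⟩ := exists_mem_forall_le_of_isLinearOrder (le := le) hX
  obtain ⟨a, haY, -, -, ham, -⟩ : m ∈ hull le Y := h ▸ mem_hull_of_mem hmX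
  obtain ⟨a', ha'X, -, -, ha'a, -⟩ : a ∈ hull le X := h ▸ mem_hull_of_mem haY
  have : a = m := antisymm_of le ham (trans_of le (hmin a' ha'X) ha'a)
  exact ⟨m, hmX, this ▸ haY⟩

theorem ltOf_of_ltOf_of_le [IsPartialOrder E le] {a b c : E} (hab : ltOf le a b) (hbc : le b c) :
    ltOf le a c :=
  ⟨trans_of le hab.1 hbc, fun hac => hab.2 (antisymm_of le hab.1 (hac ▸ hbc))⟩

theorem ncard_lt_of_forall_ltOf [Finite E] [Std.Refl le] {A B : Set E} {e : E} (he : e ∈ B)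
    (hAB : A ⊆ B) (hA : ∀ x ∈ A, ltOf le e x) : A.ncard < (B ∩ {x | le e x}).ncard :=
  have hsub : A ⊆ B ∩ {x | le e x} := fun x hx => ⟨hAB hx, (hA x hx).1⟩
  Set.ncard_lt_ncard <| (Set.ssubset_iff_of_subset hsub).mpr
    ⟨e, ⟨he, refl_of le e⟩, fun heA => (hA e heA).2 rfl⟩

theorem eReach_reverse {a b : E} : eReach t s a b ↔ eReach s t b a := by
  unfold eReach
  rw [← Relation.transGen_swap]
  simp only [eq_comm]

theorem vReach_reverse {v w : V} : vReach t s v w ↔ vReach s t w v := by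
  unfold vReach
  rw [← Relation.transGen_swap]
  simp only [and_comm]

theorem not_vReach_of_isSource {v w : V} (hw : IsSource t w) : ¬ vReach s t v w := by
  intro h
  obtain ⟨_, -, e, -, he⟩ := Relation.TransGen.tail'_iff.mp h
  exact Set.eq_empty_iff_forall_notMem.mp hw e he

theorem Progressive.eq_of_incident (hprog : Progressive s t) {v : V}
    (hv : IsSource t v ∨ IsSink s v) {e₁ e₂ : E} (h₁ : s e₁ = v ∨ t e₁ = v)
    (h₂ : s e₂ = v ∨ t e₂ = v) : e₁ = e₂ := by
  obtain ⟨a, ha⟩ := Set.ncard_eq_one.mp (hprog.2 v hv)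
  have hsub : ({e | s e = v ∨ t e = v} : Set E).Subsingleton := by
    rw [ha]
    exact Set.subsingleton_singleton
  exact hsub h₁ h₂

theorem Progressive.reverse (hprog : Progressive s t) : Progressive t s := by
  refine ⟨fun v hv => hprog.1 v (vReach_reverse.mp hv), fun v hv => ?_⟩
  simpa only [or_comm] using hprog.2 v hv.symm

theorem U1.reverse (h1 : U1 s t le) : U1 t s (swap le) := fun a b hab =>
  ⟨(h1 b a (eReach_reverse.mp hab)).1, (h1 b a (eReach_reverse.mp hab)).2.symm⟩

theorem U2.reverse (h2 : U2 s t le) : U2 t s (swap le) := fun v => by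
  simp only [hull_swap]
  exact ⟨(Set.inter_comm _ _).trans (h2 v).1,
    (congrArg (hull le) (Set.union_comm _ _)).trans ((h2 v).2.trans (Set.union_comm _ _))⟩

theorem U3.reverse (h3 : U3 s t le) : U3 t s (swap le) := fun v₁ v₂ => by
  simp only [hull_swap]
  exact ⟨(h3 v₁ v₂).2, (h3 v₁ v₂).1⟩

theorem IsUPO.reverse (hUPO : IsUPO s t le) : IsUPO t s (swap le) :=
  haveI := hUPO.1
  ⟨inferInstance, hUPO.2.1.reverse, hUPO.2.2.1.reverse, hUPO.2.2.2.reverse⟩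

theorem U4.reverse (h4 : U4 s t le) : U4 t s (swap le) := fun v hs hk => by
  simp only [hull_swap]
  exact ⟨(h4 v hk hs).2, (h4 v hk hs).1⟩

theorem CondA.reverse (hA : CondA s t le) : CondA t s (swap le) := fun v₁ v₂ hne => by
  simp only [hull_swap, vReach_reverse]
  exact ⟨(hA v₁ v₂ hne).2, (hA v₁ v₂ hne).1⟩

theorem U1.ltOf_of_adj (h1 : U1 s t le) {a b : E} (h : t a = s b) : ltOf le a b :=
  h1 a b (.single h)

theorem U3.eq_of_mem_hull_inE [Finite E] [IsLinearOrder E le] (h3 : U3 s t le) {a b : E}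
    {v w : V} (ha : t a = w) (haV : a ∈ hull le (inE t v)) (hb : t b = v)
    (hbW : b ∈ hull le (inE t w)) : w = v := by
  obtain ⟨m, hmW, hmV⟩ := inter_nonempty_of_hull_eq ⟨a, ha⟩
    (((h3 w v).1 ⟨a, ha, haV⟩).antisymm ((h3 v w).1 ⟨b, hb, hbW⟩))
  exact hmW.symm.trans hmV

theorem vReach_of_mem_hull_inE [Finite E] (hUPO : IsUPO s t le) (hprog : Progressive s t)
    (h4 : U4 s t le) {e : E} {v : V} (he : e ∈ hull le (inE t v)) (hev : t e ≠ v) :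
    vReach s t (t e) v := by
  induction hn : (hull le (inE t v) ∩ {x | le e x}).ncard using Nat.strong_induction_on
    generalizing s t le e v with
  | _ n IH =>
  have ⟨hlin, h1, h2, h3⟩ := hUPO
  have ⟨a, ha, b, hb, hae, heb⟩ := he
  have hv_src : ¬ IsSource t v := fun hv => Set.eq_empty_iff_forall_notMem.mp hv a ha
  have hv_sink : ¬ IsSink s v := fun hv => by
    have hab : a = b := hprog.eq_of_incident (.inr hv) (.inr ha) (.inr hb)
    exact hev (antisymm_of le hae (hab ▸ heb) ▸ ha)
  obtain ⟨f, hf⟩ : (outE s (t e)).Nonempty := Set.nonempty_iff_ne_empty.mpr fun hw =>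
    Set.eq_empty_iff_forall_notMem.mp (h4 v hv_src hv_sink).2 e ⟨hw, he⟩
  have hef : ltOf le e f := h1.ltOf_of_adj hf.symm
  by_cases hfv : t f = v
  · exact .single ⟨f, hf, hfv⟩
  rcases total_of le f b with hfb | hbf
  · have hfV : f ∈ hull le (inE t v) := ⟨a, ha, b, hb, trans_of le hae hef.1, hfb⟩
    have hlt := ncard_lt_of_forall_ltOf he Set.inter_subset_left
      fun x hx => ltOf_of_ltOf_of_le hef hx.2
    exact .head ⟨f, hf, rfl⟩ (IH _ (hlt.trans_eq hn) hUPO hprog h4 hfV hfv rfl)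
  · have hbE : b ∈ hull le (inE t (t e)) ∪ hull le (outE s (t e)) :=
      (h2 (t e)).2 ▸ ⟨e, .inl rfl, f, .inr hf, heb, hbf⟩
    rcases hbE with hbI | hbO
    · exact absurd (h3.eq_of_mem_hull_inE rfl he hb hbI) hev
    by_cases hbw : s b = t e
    · exact .single ⟨b, hbw, hb⟩
    have hO : ∀ x ∈ hull le (outE s (t e)), ltOf le e x :=
      fun x ⟨c, hc, _, _, hcx, _⟩ => ltOf_of_ltOf_of_le (h1.ltOf_of_adj hc.symm) hcx
    have hlt := ncard_lt_of_forall_ltOf (A := hull le (outE s (t e)) ∩ {x | le x b}) he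
      (fun x hx => ⟨a, ha, b, hb, trans_of le hae (hO x hx.1).1, hx.2⟩) fun x hx => hO x hx.1
    have hwb := IH _ (hlt.trans_eq hn) hUPO.reverse hprog.reverse h4.reverse
      (by rwa [hull_swap]) hbw (by rw [hull_swap]; rfl)
    exact (vReach_reverse.mp hwb).tail ⟨b, rfl, hb⟩

theorem vReach_of_mem_hull_outE [Finite E] (hUPO : IsUPO s t le) (hprog : Progressive s t)
    (h4 : U4 s t le) {e : E} {v : V} (he : e ∈ hull le (outE s v)) (hev : s e ≠ v) :
    vReach s t v (s e) :=
  vReach_reverse.mp <| vReach_of_mem_hull_inE hUPO.reverse hprog.reverse h4.reverse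
    (by rwa [hull_swap]) hev

theorem condA_of_u4 [Finite E] (hUPO : IsUPO s t le) (hprog : Progressive s t)
    (h4 : U4 s t le) : CondA s t le := by
  have := hUPO.1
  refine fun v₁ v₂ hne => ⟨?_, ?_⟩
  · rintro ⟨-, a, (rfl : t a = v₁), -⟩ hsub
    exact vReach_of_mem_hull_inE hUPO hprog h4 (hsub (mem_hull_of_mem rfl)) hne
  · rintro ⟨-, c, (rfl : s c = v₁), -⟩ hsub
    exact vReach_of_mem_hull_outE hUPO hprog h4 (hsub (mem_hull_of_mem rfl)) hne

theorem inputE_inter_hull_outE_eq_empty [IsPartialOrder E le] (hprog : Progressive s t)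
    (hA : CondA s t le) {v : V} (hv : ¬ IsSource t v) : inputE s t ∩ hull le (outE s v) = ∅ := by
  refine Set.eq_empty_iff_forall_notMem.mpr fun e ⟨he, heV⟩ => ?_
  have hsub : hull le (outE s (s e)) ⊆ hull le (outE s v) := by
    rintro y ⟨a, ha, b, hb, hay, hyb⟩
    obtain rfl : a = e := hprog.eq_of_incident (.inl he) (.inl ha) (.inl rfl)
    obtain rfl : b = a := hprog.eq_of_incident (.inl he) (.inl hb) (.inl rfl)
    rwa [← antisymm_of le hay hyb]
  exact not_vReach_of_isSource he
    ((hA (s e) v fun h => hv (h ▸ he)).2 ⟨e, mem_hull_of_mem rfl⟩ hsub)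

theorem u4_of_condA [IsPartialOrder E le] (hprog : Progressive s t) (hA : CondA s t le) :
    U4 s t le := fun v hs hk => by
  refine ⟨inputE_inter_hull_outE_eq_empty hprog hA hs, ?_⟩
  have h := inputE_inter_hull_outE_eq_empty hprog.reverse hA.reverse (le := swap le) hk
  rw [hull_swap] at h
  exact h

end

theorem A_iff_U4_general {V E : Type} [Fintype E]
    (s t : E → V) (le : E → E → Prop) (hUPO : IsUPO s t le)
    (hprog : Progressive s t) :
    CondA s t le ↔ U4 s t le :=
  haveI := hUPO.1
  ⟨u4_of_condA hprog, condA_of_u4 hUPO hprog⟩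

/-- for a UPO-graph on a progressive graph, (A) ↔ (U4). -/
theorem A_iff_U4 {V E : Type} [Fintype V] [Fintype E]
    (s t : E → V) (le : E → E → Prop) (hUPO : IsUPO s t le)
    (hprog : Progressive s t) :
    CondA s t le ↔ U4 s t le :=
  A_iff_U4_general s t le hUPO hprog
end

section
/- Let G be a progressive graph with a linear order ≺ on E(G) satisfying condition (P1). Then (G, ≺) is an anchored UPO-graph (i.e., ≺ satisfies (U2), (U3) and (A)) if and only if ≺ satisfies conditions (U2), (U3) and (U4). -/
variable {V E : Type}

section Auxiliary

variable {V E : Type}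

private lemma hull_flip (le : E → E → Prop) (X : Set E) : hull (flip le) X = hull le X := by
  ext y
  constructor
  · rintro ⟨a, ha, b, hb, h1, h2⟩
    exact ⟨b, hb, a, ha, h2, h1⟩
  · rintro ⟨a, ha, b, hb, h1, h2⟩
    exact ⟨b, hb, a, ha, h2, h1⟩

private lemma vReach_swap (s t : E → V) (a b : V) : vReach t s a b ↔ vReach s t b a := by
  unfold vReach
  constructor <;> intro h <;>
  · induction h with
    | single h => exact .single (by tauto)
    | tail _ h2 ih => exact .head (by tauto) ih

private lemma eReach_swap (s t : E → V) (a b : E) : eReach t s a b ↔ eReach s t b a := by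
  unfold eReach
  constructor <;> intro h <;>
  · induction h with
    | single h => exact .single h.symm
    | tail _ h2 ih => exact .head h2.symm ih

private lemma vReach_last (s t : E → V) {a b : V} (h : vReach s t a b) : ∃ g, t g = b := by
  induction h with
  | single h => obtain ⟨e, _, he⟩ := h; exact ⟨e, he⟩
  | tail _ h _ => obtain ⟨e, _, he⟩ := h; exact ⟨e, he⟩

private lemma vReach_first (s t : E → V) {a b : V} (h : vReach s t a b) : ∃ g, s g = a :=
  vReach_last t s ((vReach_swap s t b a).mpr h)

private lemma exists_ub [Fintype E] (le : E → E → Prop) (hlin : IsLinearOrder E le)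
    (X : Set E) (hX : X.Nonempty) : ∃ b ∈ X, ∀ x ∈ X, le x b := by
  classical
  haveI := hlin
  have key : ∀ (s : Finset E), s.Nonempty → ∃ b ∈ s, ∀ x ∈ s, le x b := by
    intro s
    induction s using Finset.induction_on with
    | empty => intro h; simp at h
    | @insert a s' ha ih =>
      intro _
      rcases s'.eq_empty_or_nonempty with h | h
      · subst h
        exact ⟨a, Finset.mem_insert_self _ _, by
          intro x hx
          rcases Finset.mem_insert.mp hx with rfl | hx
          · exact refl_of le x
          · simp at hx⟩
      · obtain ⟨b, hb, hbt⟩ := ih h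
        rcases total_of le a b with hab | hba
        · exact ⟨b, Finset.mem_insert_of_mem hb, by
            intro x hx
            rcases Finset.mem_insert.mp hx with rfl | hx
            · exact hab
            · exact hbt x hx⟩
        · exact ⟨a, Finset.mem_insert_self _ _, by
            intro x hx
            rcases Finset.mem_insert.mp hx with rfl | hx
            · exact refl_of le x
            · exact trans_of le (hbt x hx) hba⟩
  obtain ⟨b, hb, hbt⟩ := key X.toFinite.toFinset ((Set.Finite.toFinset_nonempty _).mpr hX)
  exact ⟨b, (Set.Finite.mem_toFinset _).mp hb,
    fun x hx => hbt x ((Set.Finite.mem_toFinset _).mpr hx)⟩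

private lemma wf_gt [Fintype E] (le : E → E → Prop) (hlin : IsLinearOrder E le) :
    WellFounded (fun a c : E => ltOf le c a) := by
  haveI := hlin
  haveI : IsTrans E (fun a c : E => ltOf le c a) := ⟨by
    rintro a b c ⟨h1, h1'⟩ ⟨h2, h2'⟩
    refine ⟨trans_of le h2 h1, ?_⟩
    rintro rfl
    exact h1' (antisymm_of le h1 h2)⟩
  haveI : IsIrrefl E (fun a c : E => ltOf le c a) := ⟨fun a h => h.2 rfl⟩
  exact Finite.wellFounded_of_trans_of_irrefl _

private lemma key_lemma [Fintype E] (s t : E → V) (le : E → E → Prop)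
    (hlin : IsLinearOrder E le)
    (hP1 : U1 s t le) (hU2 : U2 s t le) (hU3 : U3 s t le) (hU4 : U4 s t le)
    (hdeg : ∀ v, IsSink s v → ({e | s e = v ∨ t e = v} : Set E).ncard = 1)
    (v2 : V) (e1 : E) (he1 : e1 ∈ hull le (inE t v2)) (hne : t e1 ≠ v2) :
    vReach s t (t e1) v2 := by
  haveI := hlin
  have hIne : (inE t v2).Nonempty := by
    obtain ⟨a, ha, _⟩ := he1
    exact ⟨a, ha⟩
  obtain ⟨b, hbI, hbtop⟩ := exists_ub le hlin (inE t v2) hIne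
  have hbhull : ∀ y, y ∈ hull le (inE t v2) → le y b := by
    rintro y ⟨a, _, c, hc, _, hyc⟩
    exact trans_of le hyc (hbtop c hc)
  -- v2 is not a sink
  have hv2sink : ¬ IsSink s v2 := by
    intro hs
    obtain ⟨x, hx⟩ := Set.ncard_eq_one.mp (hdeg v2 hs)
    have hbx : b = x := by
      have : b ∈ ({x} : Set E) := hx ▸ (Or.inr hbI : s b = v2 ∨ t b = v2)
      simpa using this
    obtain ⟨a, ha, c, hc, hae, hec⟩ := he1
    have hax : a = x := by
      have : a ∈ ({x} : Set E) := hx ▸ (Or.inr ha : s a = v2 ∨ t a = v2)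
      simpa using this
    have hcx : c = x := by
      have : c ∈ ({x} : Set E) := hx ▸ (Or.inr hc : s c = v2 ∨ t c = v2)
      simpa using this
    have : e1 = x := antisymm_of le (hcx ▸ hec) (hax ▸ hae)
    exact hne (by rw [this, ← hax]; exact ha)
  have hv2src : ¬ IsSource t v2 := by
    intro hs
    exact absurd hbI (by rw [IsSource] at hs; rw [hs]; exact Set.notMem_empty b)
  have hU4v2 := hU4 v2 hv2src hv2sink
  -- well-founded induction on e1
  revert he1 hne
  refine (wf_gt le hlin).induction
    (C := fun e1 => e1 ∈ hull le (inE t v2) → t e1 ≠ v2 → vReach s t (t e1) v2) e1 ?_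
  clear e1
  intro e1 IH he1 hne
  -- t e1 is not a sink (by U4)
  have hv1sink : ¬ IsSink s (t e1) := by
    intro hsink
    have hmem : e1 ∈ outputE s t ∩ hull le (inE t v2) := ⟨hsink, he1⟩
    rw [hU4v2.2] at hmem
    exact hmem
  obtain ⟨f0, hf0⟩ : (outE s (t e1)).Nonempty := Set.nonempty_iff_ne_empty.mpr hv1sink
  have he1b : le e1 b := hbhull e1 he1
  have he1nb : e1 ≠ b := fun h => hne (h ▸ hbI)
  -- there is f ∈ O(t e1) with f ≼ b
  have hex : ∃ f, s f = t e1 ∧ le f b := by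
    by_contra hall
    push_neg at hall
    have hbf0 : le b f0 := (total_of le f0 b).resolve_left (hall f0 hf0)
    have hbmem : b ∈ hull le (inE t (t e1) ∪ outE s (t e1)) :=
      ⟨e1, Or.inl rfl, f0, Or.inr hf0, he1b, hbf0⟩
    rw [(hU2 (t e1)).2] at hbmem
    rcases hbmem with hbin | hbout
    · -- b ∈ hull(I(t e1)): contradiction via U3
      have hsub : hull le (inE t (t e1)) ⊆ hull le (inE t v2) :=
        (hU3 (t e1) v2).1 ⟨e1, rfl, he1⟩
      obtain ⟨_, _, c, hcI, _, hbc⟩ := hbin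
      have hcb : le c b := hbhull c (hsub ⟨c, hcI, c, hcI, refl_of le c, refl_of le c⟩)
      have : c = b := antisymm_of le hcb hbc
      exact hne (by rw [← hcI, this]; exact hbI)
    · obtain ⟨a, haO, _, _, hab, _⟩ := hbout
      exact hall a haO hab
  obtain ⟨f, hfs, hfb⟩ := hex
  have he1f : ltOf le e1 f := hP1 e1 f (.single hfs.symm)
  by_cases htf : t f = v2
  · exact Relation.TransGen.single ⟨f, hfs, htf⟩
  · have hfhull : f ∈ hull le (inE t v2) := by
      obtain ⟨a, ha, _, _, hae, _⟩ := he1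
      exact ⟨a, ha, b, hbI, trans_of le hae he1f.1, hfb⟩
    exact Relation.TransGen.head ⟨f, hfs, rfl⟩ (IH f he1f hfhull htf)

end Auxiliary

/-- for a progressive graph with (P1): ((U2), (U3), (A)) ↔ ((U2), (U3), (U4)). -/
theorem anchored_iff_U4 {V E : Type} [Fintype V] [Fintype E]
    (s t : E → V) (le : E → E → Prop) (hlin : IsLinearOrder E le)
    (hprog : Progressive s t) (hP1 : U1 s t le) :
    (U2 s t le ∧ U3 s t le ∧ CondA s t le) ↔
      (U2 s t le ∧ U3 s t le ∧ U4 s t le) := by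
  haveI := hlin
  constructor
  · rintro ⟨h2, h3, hA⟩
    refine ⟨h2, h3, ?_⟩
    intro v hvsrc hvsink
    constructor
    · rw [Set.eq_empty_iff_forall_notMem]
      rintro e ⟨hin, hhull⟩
      -- s e is a source
      have hune : s e ≠ v := fun h => hvsrc (h ▸ hin)
      have hsub : hull le (outE s (s e)) ⊆ hull le (outE s v) :=
        (h3 (s e) v).2 ⟨e, rfl, hhull⟩
      have hvr : vReach s t v (s e) :=
        (hA (s e) v hune).2 ⟨e, e, rfl, e, rfl, refl_of le e, refl_of le e⟩ hsub
      obtain ⟨g, hg⟩ := vReach_last s t hvr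
      have : g ∈ inE t (s e) := hg
      rw [hin] at this
      exact this
    · rw [Set.eq_empty_iff_forall_notMem]
      rintro e ⟨hout, hhull⟩
      have hune : t e ≠ v := fun h => hvsink (h ▸ hout)
      have hsub : hull le (inE t (t e)) ⊆ hull le (inE t v) :=
        (h3 (t e) v).1 ⟨e, rfl, hhull⟩
      have hvr : vReach s t (t e) v :=
        (hA (t e) v hune).1 ⟨e, e, rfl, e, rfl, refl_of le e, refl_of le e⟩ hsub
      obtain ⟨g, hg⟩ := vReach_first s t hvr
      have : g ∈ outE s (t e) := hg
      rw [hout] at this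
      exact this
  · rintro ⟨h2, h3, h4⟩
    refine ⟨h2, h3, ?_⟩
    intro v1 v2 hne
    constructor
    · intro hne1 hsub
      obtain ⟨y, a, haI, _⟩ := hne1
      have haH : a ∈ hull le (inE t v2) :=
        hsub ⟨a, haI, a, haI, refl_of le a, refl_of le a⟩
      have := key_lemma s t le hlin hP1 h2 h3 h4
        (fun v hv => hprog.2 v (Or.inr hv)) v2 a haH (by rw [haI]; exact hne)
      rwa [haI] at this
    · intro hne1 hsub
      -- dual application
      have hlin' : IsLinearOrder E (flip le) :=
        { refl := fun a => refl_of le a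
          trans := fun a b c h1 h2 => trans_of le h2 h1
          antisymm := fun a b h1 h2 => antisymm_of le h2 h1
          total := fun a b => (total_of le b a) }
      have hP1' : U1 t s (flip le) := by
        intro a c h
        have := hP1 c a ((eReach_swap s t a c).mp h)
        exact ⟨this.1, this.2.symm⟩
      have hU2' : U2 t s (flip le) := by
        intro v
        rw [hull_flip, hull_flip, hull_flip]
        constructor
        · rw [Set.inter_comm]
          exact (h2 v).1
        · rw [Set.union_comm (inE s v)]
          rw [Set.union_comm (hull le (inE s v))]
          exact (h2 v).2
      have hU3' : U3 t s (flip le) := by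
        intro w1 w2
        constructor
        · rw [hull_flip, hull_flip]
          exact (h3 w1 w2).2
        · rw [hull_flip, hull_flip]
          exact (h3 w1 w2).1
      have hU4' : U4 t s (flip le) := by
        intro v hsrc hsink
        have := h4 v hsink hsrc
        rw [hull_flip, hull_flip]
        exact ⟨this.2, this.1⟩
      have hdeg' : ∀ v, IsSink t v → ({e | t e = v ∨ s e = v} : Set E).ncard = 1 := by
        intro v hv
        have := hprog.2 v (Or.inl hv)
        have hset : ({e | t e = v ∨ s e = v} : Set E) = {e | s e = v ∨ t e = v} := by
          ext x; exact or_comm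
        rw [hset]
        exact this
      obtain ⟨y, a, haO, _⟩ := hne1
      have haH : a ∈ hull (flip le) (inE s v2) := by
        rw [hull_flip]
        exact hsub ⟨a, haO, a, haO, refl_of le a, refl_of le a⟩
      have := key_lemma t s (flip le) hlin' hP1' hU2' hU3' hU4' hdeg'
        v2 a haH (by rw [haO]; exact hne)
      rw [haO] at this
      exact (vReach_swap s t v1 v2).mp this
end
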